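/- Let Π be a polar space of rank n ≥ 3 and let p, q be distinct collinear points of Π. Then {p, q}^{⊥⊥} equals the line p q; in particular (p q)^{⊥⊥} = p q. -/

import Mathlib

/- Common framework: polar spaces of rank `n`, singular subspaces, projective
dimension, Grassmannians, bases and base subsets, inexact/complement subsets,
following Pankov, "Base subsets of polar Grassmannians". -/

namespace PolarGeo

variable {P : Type*}

/-- The (reflexive) collinearity relation determined by a family of lines. -/
def Col (lines : Set (Set P)) (p q : P) : Prop :=
  p = q ∨ ∃ L ∈ lines, p ∈ L ∧ q ∈ L

/-- `S` is a subspace: it contains every line through two of its distinct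
collinear points. -/
def IsSubspace (lines : Set (Set P)) (S : Set P) : Prop :=
  ∀ p ∈ S, ∀ q ∈ S, p ≠ q → ∀ L ∈ lines, p ∈ L → q ∈ L → L ⊆ S

/-- A singular subspace: a subspace whose points are mutually collinear. -/
def IsSingular (lines : Set (Set P)) (S : Set P) : Prop :=
  IsSubspace lines S ∧ ∀ p ∈ S, ∀ q ∈ S, Col lines p q

/-- A flag: a chain of nonempty singular subspaces. -/
def IsFlag (lines : Set (Set P)) (C : Set (Set P)) : Prop :=
  IsChain (· ⊆ ·) C ∧ ∀ T ∈ C, IsSingular lines T ∧ T.Nonempty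

/-- A polar space of rank `n` on the point set `P`: a partial linear space
such that every point is collinear with one or all points of every line, no
point is collinear with all others, and every maximal flag of singular
subspaces consists of `n` elements. -/
structure PolarSpace (P : Type*) (n : ℕ) where
  lines : Set (Set P)
  line_proper : ∀ L ∈ lines, L ≠ (Set.univ : Set P)
  line_two : ∀ L ∈ lines, ∃ p ∈ L, ∃ q ∈ L, p ≠ q
  point_on_line : ∀ p : P, ∃ L ∈ lines, p ∈ L
  unique_line : ∀ p q : P, p ≠ q → ∀ L₁ ∈ lines, ∀ L₂ ∈ lines,
    p ∈ L₁ → q ∈ L₁ → p ∈ L₂ → q ∈ L₂ → L₁ = L₂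
  one_or_all : ∀ p : P, ∀ L ∈ lines,
    (∃! q, q ∈ L ∧ Col lines p q) ∨ ∀ q ∈ L, Col lines p q
  no_center : ∀ p : P, ∃ q : P, ¬ Col lines p q
  flag_card : ∀ C : Set (Set P), IsFlag lines C →
    (∀ C', IsFlag lines C' → C ⊆ C' → C = C') → C.ncard = n

/-- A flag all of whose members are contained in `S`. -/
def IsFlagIn (lines : Set (Set P)) (S : Set P) (C : Set (Set P)) : Prop :=
  IsFlag lines C ∧ ∀ T ∈ C, T ⊆ S

/-- `S` is a singular subspace of projective dimension `m` (so `dim ∅ = -1`):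
a maximal chain of nonempty singular subspaces contained in `S` has `m + 1`
members. -/
def HasDim (lines : Set (Set P)) (S : Set P) (m : ℤ) : Prop :=
  IsSingular lines S ∧ ∃ C : Set (Set P), IsFlagIn lines S C ∧
    (∀ C', IsFlagIn lines S C' → C ⊆ C' → C = C') ∧
    C.Finite ∧ (C.ncard : ℤ) = m + 1

/-- The Grassmannian `G_m` of `m`-dimensional singular subspaces. -/
def Gdim (lines : Set (Set P)) (m : ℤ) : Set (Set P) := {S | HasDim lines S m}

/-- The span of `X`: the smallest subspace containing `X`. -/
def span (lines : Set (Set P)) (X : Set P) : Set P :=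
  ⋂₀ {S : Set P | IsSubspace lines S ∧ X ⊆ S}

/-- `X ⊥`: the set of points collinear with every point of `X`. -/
def perp (lines : Set (Set P)) (X : Set P) : Set P :=
  {y | ∀ x ∈ X, Col lines x y}

/-- A base of the polar space: `2n` points each of which is non-collinear
with exactly one of them. -/
def IsBase (lines : Set (Set P)) {n : ℕ} (p : Fin (2 * n) → P) : Prop :=
  Function.Injective p ∧ ∀ i, ∃! j, ¬ Col lines (p i) (p j)

/-- The base subset of `G_k` associated with a base: all `k`-dimensional
singular subspaces spanned by points of the base. -/
def baseSubset (lines : Set (Set P)) {n : ℕ} (p : Fin (2 * n) → P) (k : ℤ) :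
    Set (Set P) :=
  {S | HasDim lines S k ∧ ∃ I : Set (Fin (2 * n)), S = span lines (p '' I)}

/-- `𝓑(+x)`: the elements of `𝓑` containing the point `x`. -/
def plus (𝓑 : Set (Set P)) (x : P) : Set (Set P) := {S ∈ 𝓑 | x ∈ S}

/-- `𝓑(-x)`: the elements of `𝓑` not containing the point `x`. -/
def minus (𝓑 : Set (Set P)) (x : P) : Set (Set P) := {S ∈ 𝓑 | x ∉ S}

/-- `R ⊆ 𝓑` is inexact: some base subset of `G_k` different from `𝓑`
contains `R`. -/
def IsInexact (lines : Set (Set P)) (n : ℕ) (k : ℤ) (𝓑 R : Set (Set P)) : Prop :=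
  R ⊆ 𝓑 ∧ ∃ p' : Fin (2 * n) → P, IsBase lines p' ∧
    R ⊆ baseSubset lines p' k ∧ baseSubset lines p' k ≠ 𝓑

/-- `R ⊆ 𝓑` is exact: `𝓑` is the only base subset of `G_k` containing `R`. -/
def IsExact (lines : Set (Set P)) (n : ℕ) (k : ℤ) (𝓑 R : Set (Set P)) : Prop :=
  R ⊆ 𝓑 ∧ ∀ p' : Fin (2 * n) → P, IsBase lines p' →
    R ⊆ baseSubset lines p' k → baseSubset lines p' k = 𝓑

/-- A maximal inexact subset of `𝓑`. -/
def IsMaxInexact (lines : Set (Set P)) (n : ℕ) (k : ℤ) (𝓑 R : Set (Set P)) : Prop :=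
  IsInexact lines n k 𝓑 R ∧ ∀ R', IsInexact lines n k 𝓑 R' → R ⊆ R' → R = R'

/-- A complement subset of `𝓑`: the complement of a maximal inexact subset. -/
def IsComplement (lines : Set (Set P)) (n : ℕ) (k : ℤ) (𝓑 R : Set (Set P)) : Prop :=
  R ⊆ 𝓑 ∧ IsMaxInexact lines n k 𝓑 (𝓑 \ R)

/-- Type `C`: every `(n-2)`-dimensional singular subspace is contained in at
least `3` maximal singular subspaces. -/
def TypeC (lines : Set (Set P)) (n : ℕ) : Prop :=
  ∀ S ∈ Gdim lines ((n : ℤ) - 2), ∃ M₁ ∈ Gdim lines ((n : ℤ) - 1),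
    ∃ M₂ ∈ Gdim lines ((n : ℤ) - 1), ∃ M₃ ∈ Gdim lines ((n : ℤ) - 1),
      M₁ ≠ M₂ ∧ M₁ ≠ M₃ ∧ M₂ ≠ M₃ ∧ S ⊆ M₁ ∧ S ⊆ M₂ ∧ S ⊆ M₃

/-- Type `D`: every `(n-2)`-dimensional singular subspace is contained in
exactly `2` maximal singular subspaces. -/
def TypeD (lines : Set (Set P)) (n : ℕ) : Prop :=
  ∀ S ∈ Gdim lines ((n : ℤ) - 2),
    {M | M ∈ Gdim lines ((n : ℤ) - 1) ∧ S ⊆ M}.ncard = 2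

/-- A collineation of a point-line geometry on the whole type: a bijection
preserving the family of lines in both directions. -/
def IsCollineation (lines : Set (Set P)) (f : P → P) : Prop :=
  Function.Bijective f ∧ ∀ L : Set P, L ∈ lines ↔ f '' L ∈ lines

/-- A collineation of a partial linear space whose point set is the subset
`pts` of `X`: a bijection of `pts` mapping the family of lines onto itself in
both directions. -/
def IsCollineationOn {X : Type*} (pts : Set X) (lns : Set (Set X)) (f : X → X) : Prop :=
  Set.BijOn f pts pts ∧ (∀ ℓ ∈ lns, f '' ℓ ∈ lns) ∧
    (∀ ℓ ∈ lns, ∃ ℓ' ∈ lns, f '' ℓ' = ℓ)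

/-- Lines of the Grassmann space `𝔊_k`. For `k ≤ n - 2` a line is given by
incident `S ∈ G_{k-1}`, `U ∈ G_{k+1}` (for `k = 0` this is the shadow of an
element of `G_1`); for `k = n - 1` a line is given by an element of
`G_{n-2}`. -/
def grassLines (lines : Set (Set P)) (n k : ℕ) : Set (Set (Set P)) :=
  if k = n - 1 then
    {ℓ | ∃ S ∈ Gdim lines ((n : ℤ) - 2),
      ℓ = {T | T ∈ Gdim lines ((n : ℤ) - 1) ∧ S ⊆ T}}
  else
    {ℓ | ∃ S ∈ Gdim lines ((k : ℤ) - 1), ∃ U ∈ Gdim lines ((k : ℤ) + 1),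
      S ⊆ U ∧ ℓ = {T | T ∈ Gdim lines (k : ℤ) ∧ S ⊆ T ∧ T ⊆ U}}

/-- Collinearity of distinct points of `𝔊_k` for `k ≤ n - 2`: `S ⊥ U` and
the span of `S ∪ U` is `(k+1)`-dimensional. -/
def GColl (lines : Set (Set P)) (k : ℤ) (S U : Set P) : Prop :=
  S ≠ U ∧ (∀ a ∈ S, ∀ b ∈ U, Col lines a b) ∧
    span lines (S ∪ U) ∈ Gdim lines (k + 1)

/-- Weak adjacency in `G_k`: the intersection is `(k-1)`-dimensional. -/
def WeakAdj (lines : Set (Set P)) (k : ℤ) (S U : Set P) : Prop :=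
  S ∩ U ∈ Gdim lines (k - 1)

/-- The complement subset `C_{ij} = 𝓑(+i,-j) ∪ 𝓑(+σ(j),-σ(i))` of second
type. -/
def Cij (lines : Set (Set P)) {n : ℕ} (p : Fin (2 * n) → P)
    (σ : Fin (2 * n) → Fin (2 * n)) (k : ℤ) (i j : Fin (2 * n)) : Set (Set P) :=
  (plus (baseSubset lines p k) (p i) ∩ minus (baseSubset lines p k) (p j)) ∪
  (plus (baseSubset lines p k) (p (σ j)) ∩ minus (baseSubset lines p k) (p (σ i)))

/-- The inexact subset
`R_{ij} = 𝓑(+i,+j) ∪ 𝓑(+σ(i),+σ(j)) ∪ 𝓑(-i,-σ(j))` of second type. -/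
def Rij (lines : Set (Set P)) {n : ℕ} (p : Fin (2 * n) → P)
    (σ : Fin (2 * n) → Fin (2 * n)) (k : ℤ) (i j : Fin (2 * n)) : Set (Set P) :=
  (plus (baseSubset lines p k) (p i) ∩ plus (baseSubset lines p k) (p j)) ∪
  (plus (baseSubset lines p k) (p (σ i)) ∩ plus (baseSubset lines p k) (p (σ j))) ∪
  (minus (baseSubset lines p k) (p i) ∩ minus (baseSubset lines p k) (p (σ j)))

/-- `c(S,U)`: the number of complement subsets of second type of the base
subset containing both `S` and `U`. -/
noncomputable def cCount (lines : Set (Set P)) {n : ℕ} (p : Fin (2 * n) → P)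
    (σ : Fin (2 * n) → Fin (2 * n)) (k : ℤ) (S U : Set P) : ℕ :=
  {R : Set (Set P) | (∃ i j, j ≠ i ∧ j ≠ σ i ∧ R = Cij lines p σ k i j) ∧
    S ∈ R ∧ U ∈ R}.ncard

/-- `O_+`, `O_-` form the half-spin partition of `G_{n-1}`: two maximal
singular subspaces lie in the same class iff `n - dim (S ∩ U)` is odd. -/
def IsHalfSpinPair (lines : Set (Set P)) (n : ℕ) (Opos Oneg : Set (Set P)) : Prop :=
  Opos.Nonempty ∧ Oneg.Nonempty ∧ Disjoint Opos Oneg ∧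
  Opos ∪ Oneg = Gdim lines ((n : ℤ) - 1) ∧
  ∀ S ∈ Gdim lines ((n : ℤ) - 1), ∀ U ∈ Gdim lines ((n : ℤ) - 1),
    ((S ∈ Opos ↔ U ∈ Opos) ↔ ∃ m : ℤ, HasDim lines (S ∩ U) m ∧ Odd ((n : ℤ) - m))

/-- The base subset of `O_δ` associated with a base. -/
def baseSubsetO (lines : Set (Set P)) (n : ℕ) (Oδ : Set (Set P))
    (p : Fin (2 * n) → P) : Set (Set P) :=
  Oδ ∩ baseSubset lines p ((n : ℤ) - 1)

/-- `R ⊆ 𝓑` is inexact in `O_δ`: some base subset of `O_δ` different from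
`𝓑` contains `R`. -/
def IsInexactO (lines : Set (Set P)) (n : ℕ) (Oδ : Set (Set P))
    (𝓑 R : Set (Set P)) : Prop :=
  R ⊆ 𝓑 ∧ ∃ p' : Fin (2 * n) → P, IsBase lines p' ∧
    R ⊆ baseSubsetO lines n Oδ p' ∧ baseSubsetO lines n Oδ p' ≠ 𝓑

/-- A maximal inexact subset of a base subset `𝓑` of `O_δ`. -/
def IsMaxInexactO (lines : Set (Set P)) (n : ℕ) (Oδ : Set (Set P))
    (𝓑 R : Set (Set P)) : Prop :=
  IsInexactO lines n Oδ 𝓑 R ∧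
    ∀ R', IsInexactO lines n Oδ 𝓑 R' → R ⊆ R' → R = R'

/-- A complement subset of a base subset `𝓑` of `O_δ`. -/
def IsComplementO (lines : Set (Set P)) (n : ℕ) (Oδ : Set (Set P))
    (𝓑 R : Set (Set P)) : Prop :=
  R ⊆ 𝓑 ∧ IsMaxInexactO lines n Oδ 𝓑 (𝓑 \ R)

/-- Lines of the half-spin space `𝔒_δ`: sets of all elements of `O_δ`
containing a fixed `(n-3)`-dimensional singular subspace. -/
def halfSpinLines (lines : Set (Set P)) (n : ℕ) (Oδ : Set (Set P)) :
    Set (Set (Set P)) :=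
  {ℓ | ∃ S ∈ Gdim lines ((n : ℤ) - 3), ℓ = {T | T ∈ Oδ ∧ S ⊆ T}}

end PolarGeo

/-!
In a polar space, `x^⊥ ⊆ y^⊥` forces `x = y`. Otherwise `x ⊥ y`; pick `u` not collinear with
`y` (hence not with `x`) and let `c` be the point of the line `xy` collinear with `u`. Every point
collinear with `x` is collinear with all of `xy`, in particular with `c`. Walking along at most
two lines one finds a line `T` through `u` not contained in `c^⊥`; then `u` is the only point of
`T` collinear with `c`, and the one-or-all axiom applied to `x` and `T` gives `x ⊥ u`.

The argument only moves along lines of a subspace `S` in which no point of `xy` is collinear with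
everything, so it also applies inside `p^⊥`. If `x ∈ {p, q}^⊥⊥` were off the line `pq`, then
inside `p^⊥` every point collinear with `q` would be collinear with `x`, which it excludes.
-/

namespace PolarGeo

variable {P : Type*}

section Collinearity

variable {lines : Set (Set P)}

theorem col_refl (p : P) : Col lines p p := Or.inl rfl

theorem Col.symm {p q : P} (h : Col lines p q) : Col lines q p := by
  rcases h with h | ⟨L, hL, hp, hq⟩
  · exact Or.inl h.symm
  · exact Or.inr ⟨L, hL, hq, hp⟩

theorem col_of_mem {L : Set P} (hL : L ∈ lines) {p q : P} (hp : p ∈ L) (hq : q ∈ L) :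
    Col lines p q :=
  Or.inr ⟨L, hL, hp, hq⟩

theorem Col.exists_line {p q : P} (h : Col lines p q) (hne : p ≠ q) :
    ∃ L ∈ lines, p ∈ L ∧ q ∈ L := by
  rcases h with h | hL
  · exact absurd h hne
  · exact hL

theorem mem_perp_singleton {p y : P} : y ∈ perp lines {p} ↔ Col lines p y := by
  simp [perp]

end Collinearity

namespace PolarSpace

variable {n : ℕ} (Pol : PolarSpace P n)

theorem col_of_col_of_col {L : Set P} (hL : L ∈ Pol.lines) {a b s : P}
    (ha : a ∈ L) (hb : b ∈ L) (hab : a ≠ b)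
    (hsa : Col Pol.lines s a) (hsb : Col Pol.lines s b) :
    ∀ t ∈ L, Col Pol.lines s t := by
  rcases Pol.one_or_all s L hL with h | h
  · exact absurd (h.unique ⟨ha, hsa⟩ ⟨hb, hsb⟩) hab
  · exact h

theorem existsUnique_col_of_not_col {L : Set P} (hL : L ∈ Pol.lines) {a s : P}
    (ha : a ∈ L) (hsa : ¬ Col Pol.lines s a) : ∃! t, t ∈ L ∧ Col Pol.lines s t := by
  rcases Pol.one_or_all s L hL with h | h
  · exact h
  · exact absurd (h a ha) hsa

theorem isSubspace_perp (X : Set P) : IsSubspace Pol.lines (perp Pol.lines X) :=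
  fun _ ha _ hb hab _ hL haL hbL t htL x hx =>
    Pol.col_of_col_of_col hL haL hbL hab (ha x hx) (hb x hx) t htL

theorem perp_pair_eq_perp {L : Set P} (hL : L ∈ Pol.lines) {p q : P}
    (hp : p ∈ L) (hq : q ∈ L) (hpq : p ≠ q) :
    perp Pol.lines {p, q} = perp Pol.lines L := by
  ext s
  constructor
  · intro hs t ht
    exact (Pol.col_of_col_of_col hL hp hq hpq (hs p (by simp)).symm
      (hs q (by simp)).symm t ht).symm
  · rintro hs t (rfl | rfl)
    exacts [hs t hp, hs t hq]

theorem col_of_forall_col_imp_col {S : Set P} (hS : IsSubspace Pol.lines S)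
    {u t c w : P} (huS : u ∈ S) (htS : t ∈ S) (hut : u ≠ t)
    (hcol : Col Pol.lines u t) (hcu : Col Pol.lines c u) (hct : ¬ Col Pol.lines c t)
    (hc : ∀ s ∈ S, Col Pol.lines s w → Col Pol.lines s c) : Col Pol.lines w u := by
  obtain ⟨T, hT, huT, htT⟩ := hcol.exists_line hut
  rcases Pol.one_or_all w T hT with ⟨g, ⟨hgT, hwg⟩, -⟩ | hwT
  · have hgc : Col Pol.lines c g := (hc g (hS u huS t htS hut T hT huT htT hgT) hwg.symm).symm
    exact (Pol.existsUnique_col_of_not_col hT htT hct).unique ⟨hgT, hgc⟩ ⟨huT, hcu⟩ ▸ hwg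
  · exact hwT u huT

/-- The point `t` is `v`, or else the point `e` of the line `vd` collinear with `u`, where `d`
is the point of `M` collinear with `v`. -/
theorem exists_mem_ne_col_not_col {S : Set P} (hS : IsSubspace Pol.lines S)
    {M : Set P} (hM : M ∈ Pol.lines) (hMS : M ⊆ S)
    {u v c x : P} (hcM : c ∈ M) (hxM : x ∈ M) (hvS : v ∈ S)
    (huc : Col Pol.lines u c) (hux : ¬ Col Pol.lines u x) (hvc : ¬ Col Pol.lines v c) :
    ∃ t ∈ S, u ≠ t ∧ Col Pol.lines u t ∧ ¬ Col Pol.lines c t := by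
  by_cases huv : Col Pol.lines u v
  · exact ⟨v, hvS, fun h => hvc (h ▸ huc), huv, fun h => hvc h.symm⟩
  obtain ⟨d, ⟨hdM, hvd⟩, -⟩ := Pol.existsUnique_col_of_not_col hM hcM hvc
  have hcd : c ≠ d := fun h => hvc (h ▸ hvd)
  have hvd' : v ≠ d := by
    rintro rfl
    exact hvc (col_of_mem hM hdM hcM)
  obtain ⟨D, hD, hvD, hdD⟩ := hvd.exists_line hvd'
  obtain ⟨e, ⟨heD, hue⟩, -⟩ := Pol.existsUnique_col_of_not_col hD hvD huv
  have hud : ¬ Col Pol.lines u d := fun h =>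
    hux (Pol.col_of_col_of_col hM hcM hdM hcd huc h x hxM)
  have hed : e ≠ d := fun h => hud (h ▸ hue)
  have hce : ¬ Col Pol.lines c e := fun h =>
    hed ((Pol.existsUnique_col_of_not_col hD hvD fun h' => hvc h'.symm).unique ⟨heD, h⟩
      ⟨hdD, col_of_mem hM hcM hdM⟩)
  have hue' : u ≠ e := by
    rintro rfl
    exact huv (col_of_mem hD heD hvD)
  exact ⟨e, hS v hvS d (hMS hdM) hvd' D hD hvD hdD heD, hue', hue, hce⟩

theorem exists_mem_col_not_col {S : Set P} (hS : IsSubspace Pol.lines S)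
    {M : Set P} (hM : M ∈ Pol.lines) (hMS : M ⊆ S)
    {w x : P} (hwM : w ∈ M) (hxM : x ∈ M) (hwx : w ≠ x)
    (hS_nondeg : ∀ c ∈ M, ∃ v ∈ S, ¬ Col Pol.lines v c) :
    ∃ s ∈ S, Col Pol.lines s w ∧ ¬ Col Pol.lines s x := by
  by_contra! H
  have hM_perp : ∀ c ∈ M, ∀ s ∈ S, Col Pol.lines s w → Col Pol.lines s c :=
    fun c hc s hs hsw => Pol.col_of_col_of_col hM hwM hxM hwx hsw (H s hs hsw) c hc
  obtain ⟨u, huS, hux⟩ := hS_nondeg x hxM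
  obtain ⟨c, ⟨hcM, huc⟩, -⟩ := Pol.existsUnique_col_of_not_col hM hxM hux
  obtain ⟨v, hvS, hvc⟩ := hS_nondeg c hcM
  obtain ⟨t, htS, hut, hcol, hct⟩ :=
    Pol.exists_mem_ne_col_not_col hS hM hMS hcM hxM hvS huc hux hvc
  have hwu := Pol.col_of_forall_col_imp_col hS huS htS hut hcol huc.symm hct (hM_perp c hcM)
  exact hux (H u huS hwu.symm)

theorem exists_col_not_col {x y : P} (hxy : x ≠ y) :
    ∃ s, Col Pol.lines s x ∧ ¬ Col Pol.lines s y := by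
  by_cases hcol : Col Pol.lines x y
  · obtain ⟨M, hM, hxM, hyM⟩ := hcol.exists_line hxy
    have hnondeg : ∀ c ∈ M, ∃ v ∈ Set.univ, ¬ Col Pol.lines v c := fun c _ =>
      let ⟨v, hv⟩ := Pol.no_center c
      ⟨v, Set.mem_univ v, fun h => hv h.symm⟩
    obtain ⟨s, -, hs⟩ := Pol.exists_mem_col_not_col (fun _ _ _ _ _ _ _ _ _ => Set.subset_univ _)
      hM (Set.subset_univ M) hxM hyM hxy hnondeg
    exact ⟨s, hs⟩
  · exact ⟨x, col_refl x, hcol⟩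

theorem perp_perp_subset {L : Set P} (hL : L ∈ Pol.lines) :
    perp Pol.lines (perp Pol.lines L) ⊆ L := by
  intro x hx
  by_contra hxL
  obtain ⟨p, hpL, q, hqL, hpq⟩ := Pol.line_two L hL
  have hLperp : ∀ a ∈ L, a ∈ perp Pol.lines L := fun a ha b hb => col_of_mem hL hb ha
  have hqx : q ≠ x := fun h => hxL (h ▸ hqL)
  obtain ⟨M, hM, hqM, hxM⟩ := (hx q (hLperp q hqL)).exists_line hqx
  have hpM : p ∉ M := fun hpM => hxL (Pol.unique_line p q hpq M hM L hL hpM hqM hpL hqL ▸ hxM)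
  have hMp : M ⊆ perp Pol.lines {p} :=
    Pol.isSubspace_perp {p} q (mem_perp_singleton.2 (col_of_mem hL hpL hqL)) x
      (mem_perp_singleton.2 (hx p (hLperp p hpL))) hqx M hM hqM hxM
  have hnondeg : ∀ c ∈ M, ∃ v ∈ perp Pol.lines {p}, ¬ Col Pol.lines v c := fun c hcM =>
    let ⟨v, hvp, hvc⟩ := Pol.exists_col_not_col fun h : p = c => hpM (h ▸ hcM)
    ⟨v, mem_perp_singleton.2 hvp.symm, hvc⟩
  obtain ⟨s, hsp, hsq, hsx⟩ :=
    Pol.exists_mem_col_not_col (Pol.isSubspace_perp {p}) hM hMp hqM hxM hqx hnondeg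
  refine hsx (hx s ?_)
  rw [← Pol.perp_pair_eq_perp hL hpL hqL hpq]
  rintro y (rfl | rfl)
  exacts [mem_perp_singleton.1 hsp, hsq.symm]

theorem perp_perp_eq {L : Set P} (hL : L ∈ Pol.lines) : perp Pol.lines (perp Pol.lines L) = L :=
  (Pol.perp_perp_subset hL).antisymm fun _ ht _ hs => (hs _ ht).symm

end PolarSpace

end PolarGeo

open PolarGeo

theorem double_perp_of_collinear_general
    {P : Type*} {n : ℕ} (Pol : PolarSpace P n)
    (p q : P) (hpq : p ≠ q)
    (L : Set P) (hL : L ∈ Pol.lines) (hpL : p ∈ L) (hqL : q ∈ L) :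
    perp Pol.lines (perp Pol.lines ({p, q} : Set P)) = L ∧
      perp Pol.lines (perp Pol.lines L) = L := by
  rw [Pol.perp_pair_eq_perp hL hpL hqL hpq]
  exact ⟨Pol.perp_perp_eq hL, Pol.perp_perp_eq hL⟩

/-- For distinct collinear points `p, q`, `{p,q}^⊥⊥` is the line `p q`; in
particular `(p q)^⊥⊥ = p q`. -/
theorem double_perp_of_collinear
    {P : Type*} {n : ℕ} (Pol : PolarSpace P n) (hn : 3 ≤ n)
    (p q : P) (hpq : p ≠ q) (hcol : Col Pol.lines p q)
    (L : Set P) (hL : L ∈ Pol.lines) (hpL : p ∈ L) (hqL : q ∈ L) :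
    perp Pol.lines (perp Pol.lines ({p, q} : Set P)) = L ∧
      perp Pol.lines (perp Pol.lines L) = L :=
  double_perp_of_collinear_general Pol p q hpq L hL hpL hqL
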